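/- The set F_n of n-gram distributions satisfying flow balance is a convex polytope: the s^{n−1} flow-balance equations L(c) = R(c) have exactly s^{n−1} − 1 independent members as affine constraints on the (s^n − 1)-dimensional simplex of n-gram distributions, and F_n has affine dimension s^{n−1}(s − 1). -/

import Mathlib

/-!
`n`-gram distributions and flow balance on the de Bruijn graph.

We fix a finite alphabet `σ` with `s = |σ| ≥ 2` and an order `n = k + 1 ≥ 2`
(so contexts have length `k = n − 1 ≥ 1`).  An `n`-gram is a function
`Fin (k+1) → σ`; a context is a function `Fin k → σ`.  For an `n`-gram `g`,
`gInit g` is its length-`k` prefix (the source vertex of the corresponding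
de Bruijn edge) and `gTail g` its length-`k` suffix (the target vertex).
The `n`-gram `c·a` is `Fin.snoc c a` and `x·c` is `Fin.cons x c`; the shift
`σ(c,a)` is `gTail (Fin.snoc c a)`.
-/

open Finset

variable {σ : Type*}

/-- Length-`k` prefix of an `n`-gram (`n = k+1`): the source vertex of the edge. -/
def gInit {k : ℕ} (g : Fin (k + 1) → σ) : Fin k → σ := fun i => g i.castSucc

/-- Length-`k` suffix of an `n`-gram: the target vertex of the edge; also the
shift map, `σ(c,a) = gTail (Fin.snoc c a)`. -/
def gTail {k : ℕ} (g : Fin (k + 1) → σ) : Fin k → σ := fun i => g i.succ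

/-- An `n`-gram distribution: nonnegative and summing to `1`. -/
def IsDist [Fintype σ] [DecidableEq σ] {k : ℕ} (ρ : (Fin (k + 1) → σ) → ℝ) : Prop :=
  (∀ g, 0 ≤ ρ g) ∧ ∑ g, ρ g = 1

/-- `L(c) = Σ_a ρ(c·a)`: mass of `n`-grams beginning with context `c`. -/
def Lmass [Fintype σ] [DecidableEq σ] {k : ℕ}
    (ρ : (Fin (k + 1) → σ) → ℝ) (c : Fin k → σ) : ℝ :=
  ∑ a, ρ (Fin.snoc c a)

/-- `R(c) = Σ_x ρ(x·c)`: mass of `n`-grams ending with context `c`. -/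
def Rmass [Fintype σ] [DecidableEq σ] {k : ℕ}
    (ρ : (Fin (k + 1) → σ) → ℝ) (c : Fin k → σ) : ℝ :=
  ∑ x, ρ (Fin.cons x c)

/-- Flow balance: `L(c) = R(c)` for every context `c`. -/
def FlowBalance [Fintype σ] [DecidableEq σ] {k : ℕ}
    (ρ : (Fin (k + 1) → σ) → ℝ) : Prop :=
  ∀ c, Lmass ρ c = Rmass ρ c

/-- The polytope `F_n` of `n`-gram distributions satisfying flow balance
(the circulation polytope of the de Bruijn graph `B(n−1,s)`). -/
def FlowPolytope (σ : Type*) [Fintype σ] [DecidableEq σ] (k : ℕ) :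
    Set ((Fin (k + 1) → σ) → ℝ) :=
  {ρ | IsDist ρ ∧ FlowBalance ρ}

/-- A simple directed cycle in the de Bruijn graph `B(n−1,s)`: a cyclically ordered
list of `p ≥ 1` edges (`n`-grams) whose sources are pairwise distinct vertices and in
which the target of each edge is the source of the next. -/
structure SimpleCycle (σ : Type*) (k : ℕ) where
  /-- number of edges (`n`-grams) traversed -/
  p : ℕ
  ppos : 0 < p
  /-- the traversed edges, in cyclic order -/
  edge : Fin p → (Fin (k + 1) → σ)
  /-- the cycle is simple: visited vertices are pairwise distinct -/
  simple : Function.Injective fun i => gInit (edge i)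
  /-- consecutive edges are incident head-to-tail (cyclically) -/
  cyc : ∀ i : Fin p,
    gTail (edge i) = gInit (edge ⟨(i.val + 1) % p, Nat.mod_lt _ i.pos⟩)

attribute [local instance] Classical.propDecidable

/-- The cycle flow `f_γ`: the uniform distribution assigning mass `1/p` to each of the
`p` `n`-grams traversed by the simple cycle `γ`, and `0` to all others. -/
noncomputable def cycleFlow {σ : Type*} {k : ℕ} (γ : SimpleCycle σ k) :
    (Fin (k + 1) → σ) → ℝ :=
  fun g => if g ∈ Set.range γ.edge then 1 / (γ.p : ℝ) else 0

/-- The flow-balance constraint vector attached to a context `c`: the linear functional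
`ρ ↦ L(c) − R(c)` is the inner product of `ρ` with this vector. -/
noncomputable def constraintVec [Fintype σ] [DecidableEq σ] (k : ℕ)
    (c : Fin k → σ) : (Fin (k + 1) → σ) → ℝ :=
  fun g => (if gInit g = c then (1 : ℝ) else 0) - (if gTail g = c then (1 : ℝ) else 0)

/-!
The all-ones vector and the constraint vectors `constraintVec c` cut out, inside `ℝ^{Σ^n}`, an
affine subspace whose nonnegative part is `F_n`; hence `F_n` is convex. The constraint vectors
span the image of the coboundary `φ ↦ (g ↦ φ(init g) − φ(tail g))` on potentials of contexts,
whose kernel consists of the constants because the de Bruijn graph is strongly connected; this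
gives rank `s^{n−1} − 1`. Each constraint vector sums to zero, so the all-ones vector is
independent of them, and all constraints together have rank `s^{n−1}`. The uniform distribution
is a strictly positive point of `F_n`, so `F_n` spans the whole affine subspace, of dimension
`s^n − s^{n−1}`.
-/

open Matrix Filter Topology

theorem Matrix.finrank_ker_mulVecLin {K m n : Type*} [Field K] [Fintype m] [Fintype n]
    (A : Matrix m n K) :
    Module.finrank K (LinearMap.ker A.mulVecLin) =
      Fintype.card n - Module.finrank K (Submodule.span K (Set.range A)) := by
  have := LinearMap.finrank_range_add_finrank_ker A.mulVecLin
  rw [← Matrix.rank, A.rank_eq_finrank_span_row, Matrix.row,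
    Module.finrank_fintype_fun_eq_card] at this
  omega

theorem direction_affineSpan_Ici_inter {ι : Type*} [Finite ι] (A : AffineSubspace ℝ (ι → ℝ))
    {p : ι → ℝ} (hpA : p ∈ A) (hp : ∀ i, 0 < p i) :
    (affineSpan ℝ (Set.Ici 0 ∩ (A : Set (ι → ℝ)))).direction = A.direction := by
  refine le_antisymm (AffineSubspace.direction_le (affineSpan_le.2 Set.inter_subset_right))
    fun v hv => ?_
  have hnear : ∀ᶠ ε in 𝓝 (0 : ℝ), ∀ i, 0 < p i + ε * v i :=
    eventually_all.2 fun i => Tendsto.eventually_const_lt (hp i) <|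
      (continuous_const.add (continuous_id.mul continuous_const)).tendsto' 0 (p i) (by simp)
  obtain ⟨ε, hεp, hε⟩ :=
    ((hnear.filter_mono (nhdsWithin_le_nhds (s := Set.Ioi 0))).and self_mem_nhdsWithin).exists
  have hmem : ε • v +ᵥ p ∈ Set.Ici 0 ∩ (A : Set (ι → ℝ)) :=
    ⟨fun i => by simpa [add_comm] using (hεp i).le,
      A.vadd_mem_of_mem_direction (A.direction.smul_mem ε hv) hpA⟩
  have := vsub_mem_vectorSpan ℝ hmem ⟨fun i => (hp i).le, hpA⟩
  rw [vadd_vsub, ← direction_affineSpan] at this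
  exact (Submodule.smul_mem_iff _ hε.ne').1 this

section FlowPolytope

variable {k : ℕ}

@[simp]
theorem gInit_snoc (c : Fin k → σ) (a : σ) : gInit (Fin.snoc c a : Fin (k + 1) → σ) = c :=
  Fin.init_snoc (α := fun _ => σ) a c

@[simp]
theorem gTail_cons (c : Fin k → σ) (a : σ) : gTail (Fin.cons a c : Fin (k + 1) → σ) = c :=
  Fin.tail_cons (α := fun _ => σ) a c

/-- The windows of length `k` of the word `b ++ c` lead from `b` to `c`, each step along an
`n`-gram. -/
theorem eq_of_forall_gInit_eq_gTail {β : Type*} {f : (Fin k → σ) → β}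
    (h : ∀ g : Fin (k + 1) → σ, f (gInit g) = f (gTail g)) (b c : Fin k → σ) : f b = f c := by
  have window : ∀ t (ht : t ≤ k),
      f b = f fun i : Fin k => Fin.append b c ⟨t + i, by omega⟩ := by
    intro t ht
    induction t with
    | zero =>
      refine congrArg f (funext fun i => ?_)
      simp only [zero_add]
      exact (Fin.append_left b c i).symm
    | succ t ih =>
      refine (ih (by omega)).trans <|
        (h fun j : Fin (k + 1) => Fin.append b c ⟨t + j, by omega⟩).trans (congrArg f ?_)
      funext i
      exact congrArg (Fin.append b c) (Fin.ext (by simp only [Fin.val_succ]; omega))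
  exact (window k le_rfl).trans (congrArg f (funext fun i => Fin.append_right b c i))

variable [Fintype σ] [DecidableEq σ]

theorem sum_ite_gInit_mul (c : Fin k → σ) (x : (Fin (k + 1) → σ) → ℝ) :
    ∑ g, (if gInit g = c then (1 : ℝ) else 0) * x g = Lmass x c := by
  rw [← (Fin.snocEquiv fun _ => σ).sum_comp, Fintype.sum_prod_type, Finset.sum_comm]
  simp [Fin.snocEquiv, Lmass]

theorem sum_ite_gTail_mul (c : Fin k → σ) (x : (Fin (k + 1) → σ) → ℝ) :
    ∑ g, (if gTail g = c then (1 : ℝ) else 0) * x g = Rmass x c := by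
  rw [← (Fin.consEquiv fun _ => σ).sum_comp, Fintype.sum_prod_type, Finset.sum_comm]
  simp [Fin.consEquiv, Rmass]

theorem constraintVec_dotProduct (c : Fin k → σ) (x : (Fin (k + 1) → σ) → ℝ) :
    constraintVec k c ⬝ᵥ x = Lmass x c - Rmass x c := by
  simp only [dotProduct, constraintVec, sub_mul, Finset.sum_sub_distrib, sum_ite_gInit_mul,
    sum_ite_gTail_mul]

theorem linearCombination_constraintVec_apply (φ : (Fin k → σ) → ℝ) (g : Fin (k + 1) → σ) :
    Fintype.linearCombination ℝ (constraintVec k) φ g = φ (gInit g) - φ (gTail g) := by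
  simp [Fintype.linearCombination_apply, constraintVec, mul_sub]

theorem ker_linearCombination_constraintVec [Nonempty σ] :
    LinearMap.ker (Fintype.linearCombination ℝ (constraintVec (σ := σ) k)) = ℝ ∙ 1 := by
  refine le_antisymm (fun φ hφ => ?_) ((Submodule.span_singleton_le_iff_mem _ _).2 ?_)
  · have hconst := eq_of_forall_gInit_eq_gTail (f := φ) fun g => by
      simpa [linearCombination_constraintVec_apply, sub_eq_zero] using congrFun hφ g
    obtain ⟨c₀⟩ : Nonempty (Fin k → σ) := inferInstance
    exact Submodule.mem_span_singleton.2 ⟨φ c₀, funext fun c => by simp [hconst c c₀]⟩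
  · ext g
    simp [linearCombination_constraintVec_apply]

theorem finrank_span_constraintVec [Nonempty σ] :
    Module.finrank ℝ (Submodule.span ℝ (Set.range (constraintVec (σ := σ) k))) =
      Fintype.card σ ^ k - 1 := by
  have := LinearMap.finrank_range_add_finrank_ker
    (Fintype.linearCombination ℝ (constraintVec (σ := σ) k))
  rw [Fintype.range_linearCombination, ker_linearCombination_constraintVec,
    finrank_span_singleton one_ne_zero, Module.finrank_fintype_fun_eq_card,
    Fintype.card_fun, Fintype.card_fin] at this
  omega

theorem sum_constraintVec (c : Fin k → σ) : ∑ g, constraintVec k c g = 0 := by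
  rw [← dotProduct_one, constraintVec_dotProduct]
  simp [Lmass, Rmass]

theorem one_notMem_span_constraintVec [Nonempty σ] :
    (1 : (Fin (k + 1) → σ) → ℝ) ∉ Submodule.span ℝ (Set.range (constraintVec k)) := by
  rw [Submodule.mem_span_range_iff_exists_fun]
  rintro ⟨φ, hφ⟩
  have hsum := congrArg (fun x => ∑ g, x g) hφ
  simp [Finset.sum_apply, Finset.sum_comm (γ := Fin (k + 1) → σ), ← Finset.mul_sum,
    sum_constraintVec] at hsum
  exact absurd hsum.symm (by positivity)

theorem finrank_span_insert_one_constraintVec [Nonempty σ] :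
    Module.finrank ℝ (Submodule.span ℝ (insert 1 (Set.range (constraintVec (σ := σ) k)))) =
      Fintype.card σ ^ k := by
  rw [Submodule.span_insert, sup_comm, Submodule.finrank_sup_span_singleton
    one_notMem_span_constraintVec, finrank_span_constraintVec]
  have := Nat.one_le_pow k (Fintype.card σ) Fintype.card_pos
  omega

noncomputable def constraintMatrix (k : ℕ) :
    Matrix (Option (Fin k → σ)) (Fin (k + 1) → σ) ℝ :=
  Matrix.of fun o => o.elim 1 (constraintVec k)

theorem constraintMatrix_mulVec (ρ : (Fin (k + 1) → σ) → ℝ) :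
    constraintMatrix k *ᵥ ρ = fun o => o.elim (∑ g, ρ g) fun c => Lmass ρ c - Rmass ρ c := by
  funext o
  cases o
  exacts [one_dotProduct ρ, constraintVec_dotProduct _ ρ]

theorem range_constraintMatrix :
    Set.range (constraintMatrix (σ := σ) k) = insert 1 (Set.range (constraintVec k)) :=
  Option.range_elim _ _

theorem mem_flowPolytope_iff {ρ : (Fin (k + 1) → σ) → ℝ} :
    ρ ∈ FlowPolytope σ k ↔ 0 ≤ ρ ∧ constraintMatrix k *ᵥ ρ = fun o => o.elim 1 0 := by
  simp [FlowPolytope, IsDist, FlowBalance, constraintMatrix_mulVec, funext_iff, Option.forall,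
    Pi.le_def, sub_eq_zero, and_assoc]

theorem flowPolytope_eq_Ici_inter {ρ₀ : (Fin (k + 1) → σ) → ℝ} (h₀ : ρ₀ ∈ FlowPolytope σ k) :
    FlowPolytope σ k =
      Set.Ici 0 ∩ AffineSubspace.mk' ρ₀ (LinearMap.ker (constraintMatrix k).mulVecLin) := by
  ext ρ
  rw [mem_flowPolytope_iff, ← (mem_flowPolytope_iff.1 h₀).2]
  simp [AffineSubspace.mem_mk', mulVec_sub, sub_eq_zero]

theorem const_inv_card_mem_flowPolytope [Nonempty σ] :
    (fun _ => (Fintype.card (Fin (k + 1) → σ) : ℝ)⁻¹) ∈ FlowPolytope σ k :=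
  ⟨⟨fun _ => by positivity, by simp⟩, fun c => by simp [Lmass, Rmass]⟩

theorem finrank_ker_constraintMatrix [Nonempty σ] :
    Module.finrank ℝ (LinearMap.ker (constraintMatrix (σ := σ) k).mulVecLin) =
      Fintype.card σ ^ k * (Fintype.card σ - 1) := by
  rw [finrank_ker_mulVecLin, range_constraintMatrix, finrank_span_insert_one_constraintVec,
    Fintype.card_fun, Fintype.card_fin, pow_succ, Nat.mul_sub_one]

end FlowPolytope

theorem flowPolytope_convex_and_dimension_general [Fintype σ] [DecidableEq σ]
    (k : ℕ) (hs : 2 ≤ Fintype.card σ) :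
    Convex ℝ (FlowPolytope σ k) ∧
    Module.finrank ℝ
        (Submodule.span ℝ (Set.range (constraintVec (σ := σ) k))) =
      Fintype.card σ ^ k - 1 ∧
    Module.finrank ℝ (affineSpan ℝ (FlowPolytope σ k)).direction =
      Fintype.card σ ^ k * (Fintype.card σ - 1) := by
  have : Nonempty σ := Fintype.card_pos_iff.1 (by omega)
  rw [flowPolytope_eq_Ici_inter const_inv_card_mem_flowPolytope]
  refine ⟨(convex_Ici 0).inter (AffineSubspace.convex _), finrank_span_constraintVec, ?_⟩
  rw [direction_affineSpan_Ici_inter _ (AffineSubspace.self_mem_mk' _ _) fun _ => by positivity,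
    AffineSubspace.direction_mk', finrank_ker_constraintMatrix]

/-- `F_n` is a convex polytope: the `s^{n−1}` flow-balance equations
`L(c) = R(c)` have exactly `s^{n−1} − 1` independent members as affine constraints on
the `(s^n − 1)`-dimensional simplex of `n`-gram distributions (the span of the
constraint functionals has dimension `s^{n−1} − 1`), and `F_n` has affine dimension
`s^{n−1}(s − 1)`.  (Here `n = k + 1` and `s = |σ|`.) -/
theorem flowPolytope_convex_and_dimension [Fintype σ] [DecidableEq σ]
    (k : ℕ) (hk : 1 ≤ k) (hs : 2 ≤ Fintype.card σ) :
    Convex ℝ (FlowPolytope σ k) ∧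
    Module.finrank ℝ
        (Submodule.span ℝ (Set.range (constraintVec (σ := σ) k))) =
      Fintype.card σ ^ k - 1 ∧
    Module.finrank ℝ (affineSpan ℝ (FlowPolytope σ k)).direction =
      Fintype.card σ ^ k * (Fintype.card σ - 1) :=
  flowPolytope_convex_and_dimension_general k hs
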